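/- arXiv:1512.07318 — 4 statements merged into one kernel-verified Lean document; each statement's English description precedes it below -/
import Mathlib

section
/- Let Δ be a group and η: Δ → ℤ a ℤ-grading of Δ. Then there exists an integer d ≥ 1 such that the map y ↦ y^d is constant on η⁻¹(1); moreover, for such a d, the common value y^d (y ∈ η⁻¹(1)) is a central element of Δ, i.e. y^d ∈ Δ* for all y ∈ η⁻¹(1). -/
/-- `Δ*`: the set of central elements `ξ` of `Δ` which are of the form `ξ = y ^ c`
for some `y ∈ η⁻¹(1)` and some integer `c ≥ 1`. -/
def DeltaStar {Δ : Type*} [Group Δ] (η : Δ →* Multiplicative ℤ) : Set Δ :=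
  {ξ | ξ ∈ Subgroup.center Δ ∧
    ∃ (y : Δ) (c : ℕ), η y = Multiplicative.ofAdd 1 ∧ 1 ≤ c ∧ y ^ c = ξ}

/-- Let `Δ` be a group and `η : Δ → ℤ` a ℤ-grading of `Δ` (a surjective
homomorphism with finite kernel).  Then there exists an integer `d ≥ 1` such that
`y ↦ y ^ d` is constant on `η⁻¹(1)`; moreover, for any such `d`, we have `y ^ d ∈ Δ*`
for all `y ∈ η⁻¹(1)` (in particular the common value is central). -/
theorem exists_pow_constant_of_grading
    {Δ : Type*} [Group Δ] (η : Δ →* Multiplicative ℤ)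
    (hsurj : Function.Surjective η) (hker : Finite η.ker) :
    (∃ d : ℕ, 1 ≤ d ∧ ∀ y y' : Δ, η y = Multiplicative.ofAdd 1 →
        η y' = Multiplicative.ofAdd 1 → y ^ d = y' ^ d) ∧
      (∀ d : ℕ, 1 ≤ d →
        (∀ y y' : Δ, η y = Multiplicative.ofAdd 1 →
          η y' = Multiplicative.ofAdd 1 → y ^ d = y' ^ d) →
        ∀ y : Δ, η y = Multiplicative.ofAdd 1 → y ^ d ∈ DeltaStar η) := by
  constructor
  · -- existence of d
    obtain ⟨y₀, hy₀⟩ := hsurj (Multiplicative.ofAdd 1)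
    haveI : Finite (MulAut η.ker) :=
      Finite.of_injective (fun f => f.toEquiv) (fun a b h => MulEquiv.toEquiv_injective h)
    set m := Nat.card (MulAut η.ker) with hm
    have hmpos : 0 < m := Nat.card_pos
    set n := Nat.card η.ker with hn
    have hnpos : 0 < n := Nat.card_pos
    have hφ : MulAut.conjNormal (y₀ ^ m) = (1 : MulAut η.ker) := by
      rw [map_pow]
      exact pow_card_eq_one'
    have hcomm : ∀ k ∈ η.ker, y₀ ^ m * k = k * y₀ ^ m := by
      intro k hk
      have h1 : ((MulAut.conjNormal (y₀ ^ m) ⟨k, hk⟩ : η.ker) : Δ) = k := by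
        rw [hφ]; rfl
      have h2 : y₀ ^ m * k * (y₀ ^ m)⁻¹ = k := by
        rwa [MulAut.conjNormal_apply] at h1
      calc y₀ ^ m * k = (y₀ ^ m * k * (y₀ ^ m)⁻¹) * y₀ ^ m := by group
        _ = k * y₀ ^ m := by rw [h2]
    refine ⟨m * n, Nat.one_le_iff_ne_zero.mpr (by positivity), ?_⟩
    have key : ∀ y : Δ, η y = Multiplicative.ofAdd 1 → y ^ (m * n) = y₀ ^ (m * n) := by
      intro y hy
      set N := y ^ m * (y₀ ^ m)⁻¹ with hNdef
      have hN : N ∈ η.ker := by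
        simp [MonoidHom.mem_ker, hNdef, map_mul, map_pow, hy, hy₀]
      have hyN : y ^ m = N * y₀ ^ m := by rw [hNdef, inv_mul_cancel_right]
      have hC : Commute N (y₀ ^ m) := ((hcomm N hN).symm)
      have hNn : N ^ n = 1 := by
        have : (⟨N, hN⟩ : η.ker) ^ n = 1 := pow_card_eq_one'
        have := congrArg (Subtype.val) this
        simpa using this
      calc y ^ (m * n) = (y ^ m) ^ n := by rw [pow_mul]
        _ = (N * y₀ ^ m) ^ n := by rw [hyN]
        _ = N ^ n * (y₀ ^ m) ^ n := hC.mul_pow n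
        _ = (y₀ ^ m) ^ n := by rw [hNn, one_mul]
        _ = y₀ ^ (m * n) := by rw [pow_mul]
    intro y y' hy hy'
    rw [key y hy, key y' hy']
  · -- any such d works
    intro d hd hconst y hy
    refine ⟨?_, y, d, hy, hd, rfl⟩
    rw [Subgroup.mem_center_iff]
    intro g
    have hy' : η (g * y * g⁻¹) = Multiplicative.ofAdd 1 := by
      rw [map_mul, map_mul, map_inv, mul_comm, hy]
      group
    have := hconst (g * y * g⁻¹) y hy' hy
    rw [conj_pow] at this
    calc g * y ^ d = (g * y ^ d * g⁻¹) * g := by group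
      _ = y ^ d * g := by rw [this]
end

section
/- Let Δ be a group and η: Δ → ℤ a ℤ-grading of Δ. If ξ ∈ Δ* and ξ' ∈ Δ*, then there exist integers a ≥ 1 and a' ≥ 1 such that ξ^a = ξ'^{a'}. -/
/-- **Statement 7.** Let `Δ` be a group and `η : Δ → ℤ` a ℤ-grading of `Δ` (a surjective
homomorphism with finite kernel).  If `ξ ∈ Δ*` and `ξ' ∈ Δ*`, then there exist integers
`a ≥ 1` and `a' ≥ 1` such that `ξ ^ a = ξ' ^ a'`. -/
theorem deltaStar_pow_eq_pow
    {Δ : Type*} [Group Δ] (η : Δ →* Multiplicative ℤ)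
    (hsurj : Function.Surjective η) (hker : Finite η.ker)
    (ξ ξ' : Δ) (hξ : ξ ∈ DeltaStar η) (hξ' : ξ' ∈ DeltaStar η) :
    ∃ (a a' : ℕ), 1 ≤ a ∧ 1 ≤ a' ∧ ξ ^ a = ξ' ^ a' := by
  obtain ⟨hcen, y, c, hy, hc, hyc⟩ := hξ
  obtain ⟨hcen', y', c', hy', hc', hyc'⟩ := hξ'
  -- gradings of ξ and ξ'
  have hηξ : η ξ = Multiplicative.ofAdd (c : ℤ) := by
    rw [← hyc, map_pow, hy, ← ofAdd_nsmul]; norm_num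
  have hηξ' : η ξ' = Multiplicative.ofAdd ((c' : ℤ)) := by
    rw [← hyc', map_pow, hy', ← ofAdd_nsmul]; norm_num
  -- ξ and ξ' commute (both central)
  have hcomm0 : Commute ξ ξ' := (Subgroup.mem_center_iff.mp hcen ξ').symm
  have hcomm : Commute (ξ ^ c') (ξ' ^ c)⁻¹ := (hcomm0.pow_pow c' c).inv_right
  -- z := ξ^{c'} * ξ'^{-c} lies in the kernel
  set z : Δ := ξ ^ c' * (ξ' ^ c)⁻¹ with hz
  have hzker : z ∈ η.ker := by
    have : η z = 1 := by
      simp only [hz, map_mul, map_inv, map_pow, hηξ, hηξ', ← ofAdd_nsmul]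
      rw [← ofAdd_neg, ← ofAdd_add]
      norm_num [mul_comm]
    exact this
  -- z has finite order since the kernel is finite
  have hfin : IsOfFinOrder (⟨z, hzker⟩ : η.ker) := isOfFinOrder_of_finite _
  have hfinz : IsOfFinOrder z := by
    rcases hfin.exists_pow_eq_one with ⟨n, hn, h1⟩
    exact isOfFinOrder_iff_pow_eq_one.mpr ⟨n, hn, by
      have := congrArg (Subtype.val) h1
      simpa using this⟩
  obtain ⟨n, hn, hzn⟩ := isOfFinOrder_iff_pow_eq_one.mp hfinz
  refine ⟨c' * n, c * n, Nat.one_le_iff_ne_zero.mpr (by positivity),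
    Nat.one_le_iff_ne_zero.mpr (by positivity), ?_⟩
  have : (ξ ^ c' * (ξ' ^ c)⁻¹) ^ n = ξ ^ (c' * n) * ((ξ' ^ c) ^ n)⁻¹ := by
    rw [hcomm.mul_pow, ← pow_mul, inv_pow]
  rw [hz, this] at hzn
  rw [pow_mul ξ' c n] at *
  group at hzn ⊢
  rw [show (-(↑n * ↑c) : ℤ) = -(↑c * ↑n) by ring, zpow_neg, mul_inv_eq_one] at hzn
  rw [hzn]; ring_nf
end

section
/- Let Δ be a group, η: Δ → ℤ a ℤ-grading of Δ, and y ∈ η⁻¹(1). Then ⟨y⟩ ∩ η⁻¹(0) = {1}, the centralizer Z_Δ(y) is the internal direct product of the infinite cyclic subgroup ⟨y⟩ and the finite subgroup Z_Δ(y) ∩ η⁻¹(0), and consequently every irreducible complex representation τ of Z_Δ(y) ∩ η⁻¹(0) admits a unique extension to a representation of Z_Δ(y) on which y acts as the identity; this extension is irreducible. -/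
/-!
Since `y` has degree one and is central in `Z_Δ(y)`, the map `z ↦ y ^ (-η z) * z` is a
retraction of `Z_Δ(y)` onto its degree-zero part, with kernel `⟨y⟩`. A representation of
`Z_Δ(y)` extending `τ` and trivial on `y` is therefore forced to be `τ` composed with this
retraction, and it is simple because restricting it back along the inclusion of the
degree-zero part recovers the simple representation `τ`.
-/

open CategoryTheory

lemma mem_centralizer_self {Δ : Type*} [Group Δ] (y : Δ) :
    y ∈ Subgroup.centralizer ({y} : Set Δ) :=
  Subgroup.mem_centralizer_iff.mpr (by rintro g rfl; rfl)

open Limits Subgroup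

namespace Action

variable {V : Type*} [Category V] {G H : Type*} [Monoid G] [Monoid H]

instance res_preservesMonomorphisms (f : G →* H) [(forget V H).PreservesMonomorphisms] :
    (res V f).PreservesMonomorphisms where
  preserves i _ := (forget V G).mono_of_mono_map (inferInstanceAs (Mono ((forget V H).map i)))

instance res_reflectsIsomorphisms (f : G →* H) : (res V f).ReflectsIsomorphisms where
  reflects i _ :=
    have : IsIso i.hom := inferInstanceAs (IsIso ((forget V G).map ((res V f).map i)))
    isIso_of_hom_isIso i

instance res_preservesZeroMorphisms [HasZeroMorphisms V] (f : G →* H) :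
    (res V f).PreservesZeroMorphisms where
  map_zero _ _ := rfl

theorem simple_res_of_comp_eq_id [HasZeroMorphisms V] [(forget V G).PreservesMonomorphisms]
    {f : G →* H} {s : H →* G} (hfs : f.comp s = MonoidHom.id H) (X : Action V H) [Simple X] :
    Simple ((res V f).obj X) :=
  have : Simple ((res V s).obj ((res V f).obj X)) :=
    Simple.of_iso (Y := X) ((resComp V s f ≪≫ resCongr V hfs ≪≫ resId V).app X)
  (res V s).simple_of_simple_obj _

end Action

section ZGrading

variable {Δ : Type*} [Group Δ] (η : Δ →* Multiplicative ℤ) {y : Δ}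

theorem map_zpow_of_eq_ofAdd_one (hy : η y = Multiplicative.ofAdd 1) (k : ℤ) :
    η (y ^ k) = Multiplicative.ofAdd k := by
  rw [map_zpow, hy, ← ofAdd_zsmul, smul_eq_mul, mul_one]

theorem zpow_neg_toAdd_mul_mem_ker (hy : η y = Multiplicative.ofAdd 1) (z : Δ) :
    y ^ (-(η z).toAdd) * z ∈ η.ker := by
  rw [MonoidHom.mem_ker, map_mul, map_zpow_of_eq_ofAdd_one η hy, ofAdd_neg, ofAdd_toAdd,
    inv_mul_cancel]

theorem zpowers_inf_ker_eq_bot (hy : η y = Multiplicative.ofAdd 1) :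
    zpowers y ⊓ η.ker = ⊥ := by
  rw [eq_bot_iff_forall]
  rintro _ ⟨hx, hk⟩
  obtain ⟨k, rfl⟩ := mem_zpowers_iff.mp hx
  have hk : η (y ^ k) = 1 := hk
  rw [map_zpow_of_eq_ofAdd_one η hy, ofAdd_eq_one] at hk
  rw [hk, zpow_zero]

theorem zpow_mul_inj_of_mem_ker (hy : η y = Multiplicative.ofAdd 1) {k k' : ℤ} {t t' : Δ}
    (ht : t ∈ η.ker) (ht' : t' ∈ η.ker) (h : y ^ k * t = y ^ k' * t') : k = k' ∧ t = t' := by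
  have hk : k = k' := by
    simpa [map_zpow_of_eq_ofAdd_one η hy, MonoidHom.mem_ker.mp ht, MonoidHom.mem_ker.mp ht']
      using congrArg η h
  subst hk
  exact ⟨rfl, mul_left_cancel h⟩

def degreeZeroPart (hy : η y = Multiplicative.ofAdd 1) :
    centralizer {y} →* ↥(centralizer {y} ⊓ η.ker) :=
  MonoidHom.mk'
    (fun z => ⟨y ^ (-(η z).toAdd) * z,
      mul_mem (zpow_mem (mem_centralizer_self y) _) z.2, zpow_neg_toAdd_mul_mem_ker η hy z⟩)
    fun z w => by
      have hyz : Commute (y ^ (-(η w).toAdd)) z :=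
        Commute.zpow_left (mem_centralizer_singleton_iff.mp z.2).symm _
      ext
      simp only [coe_mul, map_mul, toAdd_mul, neg_add, zpow_add, mul_assoc]
      rw [← mul_assoc (z : Δ), ← hyz.eq, mul_assoc]

variable (hy : η y = Multiplicative.ofAdd 1)

theorem zpow_mul_degreeZeroPart (z : centralizer {y}) :
    y ^ (η z).toAdd * (degreeZeroPart η hy z : Δ) = z := by
  simp [degreeZeroPart]

theorem degreeZeroPart_inclusion (t : ↥(centralizer {y} ⊓ η.ker)) :
    degreeZeroPart η hy (inclusion inf_le_left t) = t := by
  ext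
  simp [degreeZeroPart, MonoidHom.mem_ker.mp t.2.2]

theorem degreeZeroPart_self : degreeZeroPart η hy ⟨y, mem_centralizer_self y⟩ = 1 := by
  ext
  simp [degreeZeroPart, hy]

theorem degreeZeroPart_comp_inclusion :
    (degreeZeroPart η hy).comp (inclusion inf_le_left) = MonoidHom.id _ :=
  MonoidHom.ext (degreeZeroPart_inclusion η hy)

theorem eq_comp_degreeZeroPart_iff {M : Type*} [Monoid M] (φ : centralizer {y} →* M)
    (ψ : ↥(centralizer {y} ⊓ η.ker) →* M) :
    φ = ψ.comp (degreeZeroPart η hy) ↔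
      (∀ t, φ (inclusion inf_le_left t) = ψ t) ∧ φ ⟨y, mem_centralizer_self y⟩ = 1 := by
  constructor
  · rintro rfl
    exact ⟨fun t => congrArg ψ (degreeZeroPart_inclusion η hy t),
      by rw [MonoidHom.comp_apply, degreeZeroPart_self, map_one]⟩
  · rintro ⟨hφψ, hφy⟩
    ext z
    have hz : z = ⟨y, mem_centralizer_self y⟩ ^ (η z).toAdd *
        inclusion inf_le_left (degreeZeroPart η hy z) :=
      Subtype.ext (zpow_mul_degreeZeroPart η hy z).symm
    have hyk : ⟨y, mem_centralizer_self y⟩ ^ (η z).toAdd ∈ φ.ker :=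
      zpow_mem (MonoidHom.mem_ker.mpr hφy) _
    conv_lhs => rw [hz]
    rw [map_mul, MonoidHom.mem_ker.mp hyk, one_mul, hφψ, MonoidHom.comp_apply]

end ZGrading

theorem centralizer_direct_product_and_unique_extension_general
    {Δ : Type} [Group Δ] (η : Δ →* Multiplicative ℤ)
    (y : Δ) (hy : η y = Multiplicative.ofAdd 1) :
    (Subgroup.zpowers y ⊓ η.ker = ⊥) ∧
    (∀ z ∈ Subgroup.centralizer ({y} : Set Δ),
        ∃ (k : ℤ) (t : Δ), t ∈ Subgroup.centralizer ({y} : Set Δ) ⊓ η.ker ∧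
          z = y ^ k * t) ∧
    (∀ (k k' : ℤ) (t t' : Δ),
        t ∈ Subgroup.centralizer ({y} : Set Δ) ⊓ η.ker →
        t' ∈ Subgroup.centralizer ({y} : Set Δ) ⊓ η.ker →
        y ^ k * t = y ^ k' * t' → k = k' ∧ t = t') ∧
    (∀ (V : Type) [AddCommGroup V] [Module ℂ V] [FiniteDimensional ℂ V]
        (τ : Representation ℂ ↥(Subgroup.centralizer ({y} : Set Δ) ⊓ η.ker) V),
        Simple (FDRep.of τ) →
        (∃! ρ' : Representation ℂ ↥(Subgroup.centralizer ({y} : Set Δ)) V,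
            (∀ t : ↥(Subgroup.centralizer ({y} : Set Δ) ⊓ η.ker),
              ρ' (Subgroup.inclusion inf_le_left t) = τ t) ∧
            ρ' ⟨y, mem_centralizer_self y⟩ = 1) ∧
        (∀ ρ' : Representation ℂ ↥(Subgroup.centralizer ({y} : Set Δ)) V,
            ((∀ t : ↥(Subgroup.centralizer ({y} : Set Δ) ⊓ η.ker),
              ρ' (Subgroup.inclusion inf_le_left t) = τ t) ∧
            ρ' ⟨y, mem_centralizer_self y⟩ = 1) →
            Simple (FDRep.of ρ'))) := by
  refine ⟨zpowers_inf_ker_eq_bot η hy, fun z hz => ?_,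
    fun _ _ _ _ ht ht' h => zpow_mul_inj_of_mem_ker η hy ht.2 ht'.2 h, fun V _ _ _ τ _ => ?_⟩
  · exact ⟨_, _, (degreeZeroPart η hy ⟨z, hz⟩).2, (zpow_mul_degreeZeroPart η hy ⟨z, hz⟩).symm⟩
  have extension_iff := fun ρ' => eq_comp_degreeZeroPart_iff η hy ρ' τ
  refine ⟨⟨_, (extension_iff _).mp rfl, fun ρ' h => (extension_iff ρ').mpr h⟩, fun ρ' h => ?_⟩
  rw [(extension_iff ρ').mpr h]
  exact Action.simple_res_of_comp_eq_id (degreeZeroPart_comp_inclusion η hy) (FDRep.of τ)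

/-- **Statement 9.** Let `Δ` be a group, `η : Δ → ℤ` a ℤ-grading of `Δ` (surjective with
finite kernel), and `y ∈ η⁻¹(1)`.  Then `⟨y⟩ ∩ η⁻¹(0) = {1}`, the centralizer `Z_Δ(y)` is
the internal direct product of the cyclic subgroup `⟨y⟩` and the finite subgroup
`Z_Δ(y) ∩ η⁻¹(0)` (every element of `Z_Δ(y)` is uniquely `y ^ k * t` with `k ∈ ℤ` and
`t ∈ Z_Δ(y) ∩ η⁻¹(0)`), and consequently every irreducible complex representation `τ` of
`Z_Δ(y) ∩ η⁻¹(0)` admits a unique extension to a representation of `Z_Δ(y)` on which `y`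
acts as the identity; this extension is irreducible. -/
theorem centralizer_direct_product_and_unique_extension
    {Δ : Type} [Group Δ] (η : Δ →* Multiplicative ℤ)
    (hsurj : Function.Surjective η) (hker : Finite η.ker)
    (y : Δ) (hy : η y = Multiplicative.ofAdd 1) :
    (Subgroup.zpowers y ⊓ η.ker = ⊥) ∧
    (∀ z ∈ Subgroup.centralizer ({y} : Set Δ),
        ∃ (k : ℤ) (t : Δ), t ∈ Subgroup.centralizer ({y} : Set Δ) ⊓ η.ker ∧
          z = y ^ k * t) ∧
    (∀ (k k' : ℤ) (t t' : Δ),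
        t ∈ Subgroup.centralizer ({y} : Set Δ) ⊓ η.ker →
        t' ∈ Subgroup.centralizer ({y} : Set Δ) ⊓ η.ker →
        y ^ k * t = y ^ k' * t' → k = k' ∧ t = t') ∧
    (∀ (V : Type) [AddCommGroup V] [Module ℂ V] [FiniteDimensional ℂ V]
        (τ : Representation ℂ ↥(Subgroup.centralizer ({y} : Set Δ) ⊓ η.ker) V),
        Simple (FDRep.of τ) →
        (∃! ρ' : Representation ℂ ↥(Subgroup.centralizer ({y} : Set Δ)) V,
            (∀ t : ↥(Subgroup.centralizer ({y} : Set Δ) ⊓ η.ker),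
              ρ' (Subgroup.inclusion inf_le_left t) = τ t) ∧
            ρ' ⟨y, mem_centralizer_self y⟩ = 1) ∧
        (∀ ρ' : Representation ℂ ↥(Subgroup.centralizer ({y} : Set Δ)) V,
            ((∀ t : ↥(Subgroup.centralizer ({y} : Set Δ) ⊓ η.ker),
              ρ' (Subgroup.inclusion inf_le_left t) = τ t) ∧
            ρ' ⟨y, mem_centralizer_self y⟩ = 1) →
            Simple (FDRep.of ρ'))) :=
  centralizer_direct_product_and_unique_extension_general η y hy
end

section
/- Let k be an algebraically closed field of characteristic 0, n ≥ 1, and q a nonzero integer. Let g = s·u = u·s and g' = s'·u' = u'·s' in GL_n(k), where s, s' are diagonalizable, u, u' are unipotent, and suppose s^{q^r} = s and s'^{q^{r'}} = s' for some integers r ≥ 1, r' ≥ 1. If g^q = g'^q, then g = g'. -/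
/-!
Write `g = s u` with `s` semisimple and `u` unipotent. Then `g ^ q = s ^ q u ^ q` is again a
Jordan decomposition, so by its uniqueness `g ^ q = g' ^ q` forces `s ^ q = s' ^ q` and
`u ^ q = u' ^ q`. In characteristic zero a unipotent element is determined by any nonzero power:
Newton's method for `X ^ m - y` started at `1` shows that the unipotent `m`-th root of a
unipotent `y` is unique and lies in `ℚ[y]`, so `u` and `u'` commute and coincide. Finally `s`
and `s'` are periodic points of `x ↦ x ^ q` with the same image, hence equal.
-/

open Polynomial

lemma IsNilpotent.pow_sub_one {R : Type*} [Ring R] {a : R} (ha : IsNilpotent (a - 1)) (m : ℕ) :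
    IsNilpotent (a ^ m - 1) := by
  rw [← geom_sum_mul]
  refine Commute.isNilpotent_mul_left ?_ ha
  exact Commute.sum_left _ _ _ fun i _ ↦
    (Commute.self_pow a i).symm.sub_right (Commute.one_right _)

namespace Units

variable {R : Type*} [Ring R] {u : Rˣ}

lemma isNilpotent_inv_sub_one (hu : IsNilpotent ((u : R) - 1)) :
    IsNilpotent (((u⁻¹ : Rˣ) : R) - 1) := by
  have h : ((u⁻¹ : Rˣ) : R) - 1 = -(((u⁻¹ : Rˣ) : R) * ((u : R) - 1)) := by
    rw [mul_sub, Units.inv_mul, mul_one, neg_sub]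
  rw [h, isNilpotent_neg_iff]
  refine Commute.isNilpotent_mul_left ?_ hu
  exact (Commute.units_inv_left (Commute.refl (u : R))).sub_right (Commute.one_right _)

lemma isNilpotent_zpow_sub_one (hu : IsNilpotent ((u : R) - 1)) (q : ℤ) :
    IsNilpotent (((u ^ q : Rˣ) : R) - 1) := by
  rcases q with m | m
  · simpa using hu.pow_sub_one m
  · rw [zpow_negSucc]
    exact isNilpotent_inv_sub_one (by simpa using hu.pow_sub_one (m + 1))

end Units

theorem existsUnique_isNilpotent_sub_one_pow_eq {S : Type*} [CommRing S] {m : ℕ}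
    (hm : IsUnit (m : S)) {y : S} (hy : IsNilpotent (y - 1)) :
    ∃! r : S, IsNilpotent (r - 1) ∧ r ^ m = y := by
  have h₁ : IsNilpotent (aeval (1 : S) (X ^ m - C y)) := by
    rw [← isNilpotent_neg_iff]
    simpa using hy
  have h₂ : IsUnit (aeval (1 : S) (derivative (X ^ m - C y))) := by
    simpa [derivative_X_pow] using hm
  have key := existsUnique_nilpotent_sub_and_aeval_eq_zero h₁ h₂
  simp only [← neg_sub _ (1 : S), isNilpotent_neg_iff] at key
  simpa [sub_eq_zero] using key

lemma Subalgebra.isNilpotent_sub_one_iff {R A : Type*} [CommRing R] [Ring A] [Algebra R A]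
    {B : Subalgebra R A} {b : B} : IsNilpotent (b - 1) ↔ IsNilpotent ((b : A) - 1) := by
  rw [← IsNilpotent.map_iff (f := B.val) Subtype.val_injective]
  simp

lemma isUnit_natCast_of_ne_zero {S : Type*} [Ring S] [Algebra ℚ S] {m : ℕ} (hm : m ≠ 0) :
    IsUnit (m : S) := by
  simpa using (Nat.cast_ne_zero.mpr hm : (m : ℚ) ≠ 0).isUnit.map (algebraMap ℚ S)

section Unipotent

variable {A : Type*} [Ring A] [Algebra ℚ A] {m : ℕ}

theorem exists_mem_adjoin_isNilpotent_sub_one_pow_eq {y : A} (hy : IsNilpotent (y - 1))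
    (hm : m ≠ 0) : ∃ r ∈ Algebra.adjoin ℚ {y}, IsNilpotent (r - 1) ∧ r ^ m = y := by
  obtain ⟨r, ⟨hr, hrm⟩, -⟩ := existsUnique_isNilpotent_sub_one_pow_eq
    (S := Algebra.adjoin ℚ {y}) (isUnit_natCast_of_ne_zero hm)
    (y := ⟨y, Algebra.self_mem_adjoin_singleton ℚ y⟩)
    (Subalgebra.isNilpotent_sub_one_iff.mpr hy)
  exact ⟨r, r.2, Subalgebra.isNilpotent_sub_one_iff.mp hr, congrArg Subtype.val hrm⟩

theorem eq_of_pow_eq_of_isNilpotent_sub_one_of_mem_adjoin {x u v : A}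
    (hux : u ∈ Algebra.adjoin ℚ {x}) (hvx : v ∈ Algebra.adjoin ℚ {x})
    (hu : IsNilpotent (u - 1)) (hv : IsNilpotent (v - 1)) (hm : m ≠ 0) (h : u ^ m = v ^ m) :
    u = v :=
  congrArg Subtype.val <| (existsUnique_isNilpotent_sub_one_pow_eq
    (S := Algebra.adjoin ℚ {x}) (isUnit_natCast_of_ne_zero hm) (y := ⟨u, hux⟩ ^ m)
    (Subalgebra.isNilpotent_sub_one_iff.mpr (by simpa using hu.pow_sub_one m))).unique
    (y₁ := ⟨u, hux⟩) (y₂ := ⟨v, hvx⟩)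
    ⟨Subalgebra.isNilpotent_sub_one_iff.mpr hu, rfl⟩
    ⟨Subalgebra.isNilpotent_sub_one_iff.mpr hv, Subtype.ext (by simp [h])⟩

theorem mem_adjoin_pow_of_isNilpotent_sub_one {u : A} (hu : IsNilpotent (u - 1)) (hm : m ≠ 0) :
    u ∈ Algebra.adjoin ℚ {u ^ m} := by
  obtain ⟨r, hr, hr₁, hrm⟩ :=
    exists_mem_adjoin_isNilpotent_sub_one_pow_eq (hu.pow_sub_one m) hm
  have hu_mem : u ∈ Algebra.adjoin ℚ {u} := Algebra.self_mem_adjoin_singleton ℚ u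
  have hr_mem : r ∈ Algebra.adjoin ℚ {u} :=
    Algebra.adjoin_le (Set.singleton_subset_iff.mpr (pow_mem hu_mem m)) hr
  rwa [eq_of_pow_eq_of_isNilpotent_sub_one_of_mem_adjoin hr_mem hu_mem hr₁ hu hm hrm] at hr

theorem eq_of_pow_eq_of_isNilpotent_sub_one {u v : A} (hu : IsNilpotent (u - 1))
    (hv : IsNilpotent (v - 1)) (hm : m ≠ 0) (h : u ^ m = v ^ m) : u = v :=
  eq_of_pow_eq_of_isNilpotent_sub_one_of_mem_adjoin (mem_adjoin_pow_of_isNilpotent_sub_one hu hm)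
    (h ▸ mem_adjoin_pow_of_isNilpotent_sub_one hv hm) hu hv hm h

theorem Units.eq_of_zpow_eq_of_isNilpotent_sub_one {u v : Aˣ} (hu : IsNilpotent ((u : A) - 1))
    (hv : IsNilpotent ((v : A) - 1)) {q : ℤ} (hq : q ≠ 0) (h : u ^ q = v ^ q) : u = v := by
  have h' : u ^ q.natAbs = v ^ q.natAbs := by
    rcases Int.natAbs_eq q with hq' | hq' <;> rw [hq'] at h <;>
      simpa only [zpow_neg, inv_inj, zpow_natCast] using h
  exact Units.ext <| eq_of_pow_eq_of_isNilpotent_sub_one hu hv (Int.natAbs_ne_zero.mpr hq)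
    (by simpa using congrArg Units.val h')

end Unipotent

theorem Module.End.eq_of_mul_eq_mul_of_isSemisimple {K V : Type*} [Field K] [PerfectField K]
    [AddCommGroup V] [Module K V] [FiniteDimensional K V] {s₁ u₁ s₂ u₂ : Module.End K V}
    (hs₁ : s₁.IsSemisimple) (hs₂ : s₂.IsSemisimple)
    (hu₁ : IsNilpotent (u₁ - 1)) (hu₂ : IsNilpotent (u₂ - 1))
    (hc₁ : Commute s₁ u₁) (hc₂ : Commute s₂ u₂) (h : s₁ * u₁ = s₂ * u₂) :
    s₁ = s₂ := by
  -- `s * u = s * (u - 1) + s` is the additive Jordan decomposition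
  have hn₁ : IsNilpotent (s₁ * (u₁ - 1)) :=
    (hc₁.sub_right (Commute.one_right _)).isNilpotent_mul_left hu₁
  have hn₂ : IsNilpotent (s₂ * (u₂ - 1)) :=
    (hc₂.sub_right (Commute.one_right _)).isNilpotent_mul_left hu₂
  refine (isNilpotent_isSemisimple_unique hn₁ hs₁ hn₂ hs₂ ?_ ?_ ?_).2
  · exact ((Commute.refl s₁).mul_left (hc₁.sub_right (Commute.one_right _)).symm)
  · exact ((Commute.refl s₂).mul_left (hc₂.sub_right (Commute.one_right _)).symm)
  · simpa [mul_sub] using h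

namespace Matrix

variable {ι K : Type*} [Fintype ι] [DecidableEq ι] [Field K]

theorem isSemisimple_toLinAlgEquiv'_diagonal (d : ι → K) :
    Module.End.IsSemisimple (toLinAlgEquiv' (diagonal d)) := by
  classical
  set p : K[X] := ∏ μ ∈ Finset.univ.image d, (X - C μ)
  have hp : Squarefree p :=
    (separable_prod_X_sub_C_iff'.mpr fun _ _ _ _ h ↦ h).squarefree
  refine Module.End.isSemisimple_of_squarefree_aeval_eq_zero hp ?_
  have hd : aeval d p = 0 := by
    ext i
    rw [aeval_pi_apply₂, map_prod]
    exact Finset.prod_eq_zero (Finset.mem_image_of_mem d (Finset.mem_univ i)) (by simp)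
  simpa [← aeval_algHom_apply] using
    congrArg ((toLinAlgEquiv' : Matrix ι ι K ≃ₐ[K] _).toAlgHom.comp (diagonalAlgHom K)) hd

namespace GeneralLinearGroup

def IsDiagonalizable (x : GL ι K) : Prop :=
  ∃ (P : GL ι K) (d : ι → K), ((P * x * P⁻¹ : GL ι K) : Matrix ι ι K) = diagonal d

theorem IsDiagonalizable.isSemisimple {x : GL ι K} (hx : IsDiagonalizable x) :
    Module.End.IsSemisimple (toLinAlgEquiv' (x : Matrix ι ι K)) := by
  obtain ⟨P, d, h⟩ := hx
  refine ((toLinearEquiv' (P : Matrix ι ι K) P.invertible).isSemisimple_iff _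
    (toLinAlgEquiv' (diagonal d)) ?_).mpr (isSemisimple_toLinAlgEquiv'_diagonal d)
  show Matrix.toLin' (P : Matrix ι ι K) ∘ₗ Matrix.toLin' (x : Matrix ι ι K) =
    Matrix.toLin' (diagonal d) ∘ₗ Matrix.toLin' (P : Matrix ι ι K)
  rw [← toLin'_mul, ← toLin'_mul, ← h]
  simp [mul_assoc]

theorem exists_val_zpow_eq_diagonal {D : GL ι K} {d : ι → K}
    (h : (D : Matrix ι ι K) = diagonal d) (q : ℤ) :
    ∃ d' : ι → K, ((D ^ q : GL ι K) : Matrix ι ι K) = diagonal d' := by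
  rcases q with m | m
  · exact ⟨d ^ m, by simp [h, diagonal_pow]⟩
  · refine ⟨Ring.inverse (d ^ (m + 1)), ?_⟩
    rw [zpow_negSucc, coe_units_inv, Units.val_pow_eq_pow_val, h, diagonal_pow, inv_diagonal]

theorem IsDiagonalizable.zpow {x : GL ι K} (hx : IsDiagonalizable x) (q : ℤ) :
    IsDiagonalizable (x ^ q) := by
  obtain ⟨P, d, h⟩ := hx
  exact ⟨P, by simpa only [conj_zpow] using exists_val_zpow_eq_diagonal h q⟩

theorem eq_of_mul_eq_mul_of_isSemisimple [PerfectField K] {s₁ u₁ s₂ u₂ : GL ι K}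
    (hs₁ : Module.End.IsSemisimple (toLinAlgEquiv' (s₁ : Matrix ι ι K)))
    (hs₂ : Module.End.IsSemisimple (toLinAlgEquiv' (s₂ : Matrix ι ι K)))
    (hu₁ : IsNilpotent ((u₁ : Matrix ι ι K) - 1))
    (hu₂ : IsNilpotent ((u₂ : Matrix ι ι K) - 1))
    (hc₁ : Commute s₁ u₁) (hc₂ : Commute s₂ u₂) (h : s₁ * u₁ = s₂ * u₂) :
    s₁ = s₂ := by
  refine Units.ext <| toLinAlgEquiv'.injective <|
    Module.End.eq_of_mul_eq_mul_of_isSemisimple hs₁ hs₂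
      (by simpa using hu₁.map toLinAlgEquiv') (by simpa using hu₂.map toLinAlgEquiv')
      (hc₁.units_val.map _) (hc₂.units_val.map _) ?_
  simpa using congrArg (fun g : GL ι K ↦ toLinAlgEquiv' (g : Matrix ι ι K)) h

end GeneralLinearGroup

end Matrix

theorem jordan_zpow_injective_general
    {k : Type*} [Field k] [CharZero k] (n : ℕ)
    (q : ℤ) (hq : q ≠ 0)
    (g s u g' s' u' : GL (Fin n) k)
    (hs : ∃ (P : GL (Fin n) k) (d : Fin n → k),
      ((P * s * P⁻¹ : GL (Fin n) k) : Matrix (Fin n) (Fin n) k) = Matrix.diagonal d)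
    (hs' : ∃ (P : GL (Fin n) k) (d : Fin n → k),
      ((P * s' * P⁻¹ : GL (Fin n) k) : Matrix (Fin n) (Fin n) k) = Matrix.diagonal d)
    (hu : IsNilpotent ((u : Matrix (Fin n) (Fin n) k) - 1))
    (hu' : IsNilpotent ((u' : Matrix (Fin n) (Fin n) k) - 1))
    (hgsu : g = s * u) (hgus : g = u * s)
    (hgsu' : g' = s' * u') (hgus' : g' = u' * s')
    (r r' : ℕ) (hr : 1 ≤ r) (hr' : 1 ≤ r')
    (hsr : s ^ (q ^ r) = s) (hsr' : s' ^ (q ^ r') = s')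
    (h : g ^ q = g' ^ q) :
    g = g' := by
  have hsu : Commute s u := hgsu.symm.trans hgus
  have hsu' : Commute s' u' := hgsu'.symm.trans hgus'
  have hpow : s ^ q * u ^ q = s' ^ q * u' ^ q := by
    rw [← hsu.mul_zpow, ← hsu'.mul_zpow, ← hgsu, ← hgsu', h]
  have hsq : s ^ q = s' ^ q :=
    Matrix.GeneralLinearGroup.eq_of_mul_eq_mul_of_isSemisimple
      (Matrix.GeneralLinearGroup.IsDiagonalizable.zpow hs q).isSemisimple
      (Matrix.GeneralLinearGroup.IsDiagonalizable.zpow hs' q).isSemisimple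
      (Units.isNilpotent_zpow_sub_one hu q) (Units.isNilpotent_zpow_sub_one hu' q)
      (hsu.zpow_zpow q q) (hsu'.zpow_zpow q q) hpow
  have hu_eq : u = u' :=
    Units.eq_of_zpow_eq_of_isNilpotent_sub_one hu hu' hq (mul_left_cancel (hsq ▸ hpow))
  have hs_eq : s = s' := by
    refine Function.IsPeriodicPt.eq_of_apply_eq (f := (· ^ q)) ?_ ?_ hr hr' hsq
    · simpa [Function.IsPeriodicPt, Function.IsFixedPt, zpow_iterate] using hsr
    · simpa [Function.IsPeriodicPt, Function.IsFixedPt, zpow_iterate] using hsr'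
  rw [hgsu, hgsu', hs_eq, hu_eq]

/-- **Statement 17.** Let `k` be an algebraically closed field of characteristic 0,
`n ≥ 1`, and `q` a nonzero integer.  Let `g = s * u = u * s` and `g' = s' * u' = u' * s'`
in `GL_n(k)`, where `s, s'` are diagonalizable, `u, u'` are unipotent, and suppose
`s ^ (q ^ r) = s` and `s' ^ (q ^ r') = s'` for some integers `r ≥ 1`, `r' ≥ 1`.
If `g ^ q = g' ^ q`, then `g = g'`. -/
theorem jordan_zpow_injective
    {k : Type*} [Field k] [IsAlgClosed k] [CharZero k] (n : ℕ) (hn : 1 ≤ n)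
    (q : ℤ) (hq : q ≠ 0)
    (g s u g' s' u' : GL (Fin n) k)
    (hs : ∃ (P : GL (Fin n) k) (d : Fin n → k),
      ((P * s * P⁻¹ : GL (Fin n) k) : Matrix (Fin n) (Fin n) k) = Matrix.diagonal d)
    (hs' : ∃ (P : GL (Fin n) k) (d : Fin n → k),
      ((P * s' * P⁻¹ : GL (Fin n) k) : Matrix (Fin n) (Fin n) k) = Matrix.diagonal d)
    (hu : IsNilpotent ((u : Matrix (Fin n) (Fin n) k) - 1))
    (hu' : IsNilpotent ((u' : Matrix (Fin n) (Fin n) k) - 1))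
    (hgsu : g = s * u) (hgus : g = u * s)
    (hgsu' : g' = s' * u') (hgus' : g' = u' * s')
    (r r' : ℕ) (hr : 1 ≤ r) (hr' : 1 ≤ r')
    (hsr : s ^ (q ^ r) = s) (hsr' : s' ^ (q ^ r') = s')
    (h : g ^ q = g' ^ q) :
    g = g' :=
  jordan_zpow_injective_general n q hq g s u g' s' u' hs hs' hu hu' hgsu hgus hgsu' hgus' r r' hr
    hr' hsr hsr' h
end
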